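/- Let z₋, z₊ ∈ ℝ with 0 < z₋ < z₊. Then ∫₀^{z₋} dz / (√z · √((z₊−z)(z₋−z))) = (π/√z₊) · F(1/2, 1/2; 1; z₋/z₊). -/

import Mathlib

/-- The Pochhammer symbol `(q)_k = q(q+1)⋯(q+k−1)`. -/
noncomputable def poch (q : ℝ) (k : ℕ) : ℝ := ∏ i ∈ Finset.range k, (q + (i : ℝ))

/-- The Gauss hypergeometric series `F(a,b;c;x) = Σ_n (a)_n (b)_n / ((c)_n n!) xⁿ`. -/
noncomputable def gaussF (a b c x : ℝ) : ℝ :=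
  ∑' n : ℕ, poch a n * poch b n / (poch c n * (n.factorial : ℝ)) * x ^ n

/-!
Substituting `z = z₋ sin² θ` turns the integral into `(2/√z₊) ∫₀^{π/2} (1 - k sin² θ)^{-1/2} dθ`
with `k = z₋/z₊`, a complete elliptic integral of the first kind. Expanding the integrand by the
binomial series `(1 - x)^{-a} = Σ (a)ₙ/n! xⁿ` and integrating term by term with Wallis' formula
`∫₀^{π/2} sin^{2n} θ dθ = (π/2) (1/2)ₙ/n!` gives `(π/2) Σ ((1/2)ₙ/n!)² kⁿ = (π/2) F(1/2, 1/2; 1; k)`.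
-/

open Real Set
open scoped Nat

lemma poch_succ (q : ℝ) (n : ℕ) : poch q (n + 1) = poch q n * (q + n) :=
  Finset.prod_range_succ _ _

lemma poch_one (n : ℕ) : poch 1 n = n ! := by
  induction n with
  | zero => simp [poch]
  | succ n ih => rw [poch_succ, ih, Nat.factorial_succ]; push_cast; ring

lemma poch_eq_ascPochhammer_eval (q : ℝ) (n : ℕ) : poch q n = (ascPochhammer ℝ n).eval q := by
  induction n with
  | zero => simp [poch]
  | succ n ih => rw [poch_succ, ih, ascPochhammer_succ_eval]

lemma poch_div_factorial_eq_choose (q : ℝ) (n : ℕ) :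
    poch q n / n ! = Ring.choose (q + n - 1) n := by
  rw [← Ring.multichoose_eq, poch_eq_ascPochhammer_eval,
    ← Polynomial.ascPochhammer_smeval_eq_eval,
    ← Ring.factorial_nsmul_multichoose_eq_ascPochhammer, nsmul_eq_mul]
  field_simp

theorem hasSum_poch_div_factorial_mul_pow (a : ℝ) {x : ℝ} (hx : |x| < 1) :
    HasSum (fun n => poch a n / n ! * x ^ n) (1 / (1 - x) ^ a) := by
  have := (one_div_one_sub_rpow_hasFPowerSeriesOnBall_zero a).hasSum
    (y := x) (by simpa [enorm_eq_nnnorm, ← NNReal.coe_lt_coe] using hx)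
  simpa [poch_div_factorial_eq_choose, FormalMultilinearSeries.ofScalars_apply_eq, mul_comm]
    using this

lemma summable_abs_poch_div_factorial_mul_pow (a : ℝ) {x : ℝ} (hx : |x| < 1) :
    Summable (fun n => |poch a n / n !| * |x| ^ n) := by
  have hr := (one_div_one_sub_rpow_hasFPowerSeriesOnBall_zero a).r_le
  have := FormalMultilinearSeries.summable_norm_mul_pow _ (r := ‖x‖₊)
    (lt_of_lt_of_le (by simpa [← NNReal.coe_lt_coe] using hx) hr)
  simpa [FormalMultilinearSeries.ofScalars_norm, poch_div_factorial_eq_choose] using this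

lemma integral_sin_pow_even_zero_pi_div_two (n : ℕ) :
    ∫ x in 0..π / 2, sin x ^ (2 * n) = π / 2 * (poch (1 / 2) n / n !) := by
  induction n with
  | zero => simp [poch]
  | succ n ih =>
    rw [show 2 * (n + 1) = 2 * n + 2 by ring, integral_sin_pow, ih, poch_succ, Nat.factorial_succ,
      sin_zero, cos_pi_div_two, zero_pow (Nat.succ_ne_zero _), zero_mul, mul_zero, sub_zero,
      zero_div, zero_add]
    push_cast
    field_simp
    ring

theorem hasSum_integral_one_div_one_sub_mul_sin_sq_rpow (a : ℝ) {m : ℝ} (hm : |m| < 1) :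
    HasSum (fun n => π / 2 * (poch a n / n ! * (poch (1 / 2) n / n !)) * m ^ n)
      (∫ θ in 0..π / 2, 1 / (1 - m * sin θ ^ 2) ^ a) := by
  have hsin : ∀ θ, |m * sin θ ^ 2| ≤ |m| := fun θ => by
    rw [abs_mul, abs_of_nonneg (sq_nonneg (sin θ))]
    exact mul_le_of_le_one_right (abs_nonneg m) (sin_sq_le_one θ)
  have hF : HasSum (fun n => ∫ θ in 0..π / 2, poch a n / n ! * (m * sin θ ^ 2) ^ n)
      (∫ θ in 0..π / 2, 1 / (1 - m * sin θ ^ 2) ^ a) :=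
    intervalIntegral.hasSum_integral_of_dominated_convergence
      (fun n _ => |poch a n / n !| * |m| ^ n)
      (fun n => by fun_prop)
      (fun n => Filter.Eventually.of_forall fun θ _ => by
        rw [Real.norm_eq_abs, abs_mul, abs_pow]
        exact mul_le_mul_of_nonneg_left (pow_le_pow_left₀ (abs_nonneg _) (hsin θ) n)
          (abs_nonneg _))
      (Filter.Eventually.of_forall fun _ _ => summable_abs_poch_div_factorial_mul_pow a hm)
      intervalIntegrable_const
      (Filter.Eventually.of_forall fun θ _ =>
        hasSum_poch_div_factorial_mul_pow a ((hsin θ).trans_lt hm))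
  convert hF using 2 with n
  simp_rw [mul_pow, ← pow_mul, ← mul_assoc]
  rw [intervalIntegral.integral_const_mul, integral_sin_pow_even_zero_pi_div_two]
  ring

theorem integral_one_div_one_sub_mul_sin_sq_rpow (a : ℝ) {m : ℝ} (hm : |m| < 1) :
    ∫ θ in 0..π / 2, 1 / (1 - m * sin θ ^ 2) ^ a = π / 2 * gaussF a (1 / 2) 1 m := by
  rw [gaussF, ← tsum_mul_left, ← (hasSum_integral_one_div_one_sub_mul_sin_sq_rpow a hm).tsum_eq]
  congr 1 with n
  rw [poch_one]
  ring

lemma sin_pos_and_cos_pos_of_mem_Ioo {θ : ℝ} (hθ : θ ∈ Ioo 0 (π / 2)) :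
    0 < sin θ ∧ 0 < cos θ :=
  ⟨sin_pos_of_pos_of_lt_pi hθ.1 (by linarith [hθ.2, pi_pos]),
    cos_pos_of_mem_Ioo ⟨by linarith [hθ.1, pi_pos], hθ.2⟩⟩

lemma integral_one_div_sqrt_mul_sqrt_eq_integral_sin_sq {zm zp : ℝ} (h0 : 0 < zm) (h1 : zm < zp) :
    ∫ z in 0..zm, 1 / (√z * √((zp - z) * (zm - z)))
      = 2 / √zp * ∫ θ in 0..π / 2, 1 / (1 - zm / zp * sin θ ^ 2) ^ (1 / 2 : ℝ) := by
  have hzp : 0 < zp := h0.trans h1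
  have hsubst := intervalIntegral.integral_comp_mul_deriv_of_deriv_nonneg
    (f := fun θ => zm * sin θ ^ 2) (f' := fun θ => zm * (2 * sin θ * cos θ))
    (g := fun z => 1 / (√z * √((zp - z) * (zm - z)))) (a := 0) (b := π / 2)
    (by fun_prop)
    (fun θ _ => by simpa using ((hasDerivAt_sin θ).pow 2).const_mul zm)
    (fun θ hθ => by
      rw [min_eq_left (by positivity), max_eq_right (by positivity)] at hθ
      obtain ⟨hs, hc⟩ := sin_pos_and_cos_pos_of_mem_Ioo hθ
      positivity)
  simp only [sin_zero, sin_pi_div_two, ne_eq, OfNat.ofNat_ne_zero, not_false_eq_true, zero_pow,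
    mul_zero, one_pow, mul_one] at hsubst
  rw [← intervalIntegral.integral_const_mul, ← hsubst]
  refine intervalIntegral.integral_congr_Ioo_of_le (by positivity) fun θ hθ => ?_
  obtain ⟨hs, hc⟩ := sin_pos_and_cos_pos_of_mem_Ioo hθ
  have hk : 0 < 1 - zm / zp * sin θ ^ 2 := by
    have : zm / zp < 1 := (div_lt_one hzp).2 h1
    nlinarith [sin_sq_le_one θ, div_pos h0 hzp]
  have hzp_sub : zp - zm * sin θ ^ 2 = zp * (1 - zm / zp * sin θ ^ 2) := by field_simp
  have hzm_sub : zm - zm * sin θ ^ 2 = zm * cos θ ^ 2 := by rw [cos_sq']; ring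
  rw [Function.comp_apply, hzp_sub, hzm_sub, ← sqrt_eq_rpow, sqrt_mul h0.le, sqrt_sq hs.le,
    sqrt_mul (by positivity), sqrt_mul hzp.le, sqrt_mul h0.le, sqrt_sq hc.le]
  have := sqrt_pos.2 h0
  have := sqrt_pos.2 hzp
  have := sqrt_pos.2 hk
  field_simp
  rw [sq_sqrt h0.le]

/-- for `0 < z₋ < z₊`,
`∫₀^{z₋} dz/(√z √((z₊−z)(z₋−z))) = (π/√z₊)·F(1/2,1/2;1;z₋/z₊)`
(`zm` stands for `z₋`, `zp` for `z₊`). -/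
theorem stmt_9 (zm zp : ℝ) (h0 : 0 < zm) (h1 : zm < zp) :
    ∫ z in (0 : ℝ)..zm, 1 / (Real.sqrt z * Real.sqrt ((zp - z) * (zm - z)))
      = Real.pi / Real.sqrt zp * gaussF (1 / 2) (1 / 2) 1 (zm / zp) := by
  have hzp : 0 < zp := h0.trans h1
  have hk : |zm / zp| < 1 := by
    rw [abs_of_pos (div_pos h0 hzp)]
    exact (div_lt_one hzp).2 h1
  rw [integral_one_div_sqrt_mul_sqrt_eq_integral_sin_sq h0 h1,
    integral_one_div_one_sub_mul_sin_sq_rpow _ hk]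
  ring
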